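/- arXiv:1111.0618 — 3 statements merged into one kernel-verified Lean document; each statement's English description precedes it below -/
import Mathlib

section
/- Let j ≥ 0 be an integer. Let v₀ ∈ Q_j, and for each m ∈ {1,2,3,4} let v_{b,m} be a real polynomial of degree ≤ j in the coordinate running along the edge F_m. Then the following are equivalent: (i) for every q ∈ RT_j(K) one has −∫_K v₀ (div q) dx dy + Σ_{m=1}^{4} ∫_{F_m} v_{b,m} (q·n_m) ds = 0; (ii) there exists a constant c ∈ ℝ such that v₀ ≡ c on K and v_{b,m} ≡ c on F_m for every m. -/
/-!
Testing with `q = (f(x) g(y), 0)` and integrating out `y` reduces (i) to a one-variable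
statement: for each `g` of degree `≤ j`, the polynomial `u(x) = ∫ v₀(x,y) g(y) dy` (degree `≤ j`)
satisfies `∫ u f' = f(x₁) ∫ v_{b,2} g - f(x₀) ∫ v_{b,1} g` for all `f` of degree `≤ j + 1`.
Taking `f = (x - x₀)(x₁ - x) u'` forces `u' = 0`, and `f = 1`, `f = x` identify the constant.
Since a polynomial of degree `≤ j` is determined by its moments against degree `≤ j`
polynomials, `v₀(x, ·) = v_{b,1} = v_{b,2}` for every `x`; the fields `(0, f(x) g(y))` give the
same in the other direction. The converse is the divergence theorem on `K`.
-/

open MeasureTheory MvPolynomial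

noncomputable section

/-- Real polynomials in two variables. -/
abbrev Poly2 := MvPolynomial (Fin 2) ℝ

/-- Evaluate a two-variable polynomial at `(x, y)`. -/
def evalP (p : Poly2) (x y : ℝ) : ℝ := MvPolynomial.eval ![x, y] p

/-- `Q_{r,s}`: degree `≤ r` in the first variable and `≤ s` in the second. -/
def memQ (r s : ℕ) (p : Poly2) : Prop := p.degreeOf 0 ≤ r ∧ p.degreeOf 1 ≤ s

/-- The divergence of a polynomial vector field. -/
def divP (q : Poly2 × Poly2) : Poly2 := pderiv 0 q.1 + pderiv 1 q.2

/-- The Raviart–Thomas space `RT_j(K) = Q_{j+1,j} × Q_{j,j+1}`. -/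
def memRT (j : ℕ) (q : Poly2 × Poly2) : Prop := memQ (j+1) j q.1 ∧ memQ j (j+1) q.2

open Set Polynomial

namespace Polynomial

theorem eq_zero_of_integral_eq_zero_of_nonneg {a b : ℝ} (hab : a < b) {p : ℝ[X]}
    (hp : ∀ x ∈ Ioc a b, 0 ≤ p.eval x) (h : ∫ x in a..b, p.eval x = 0) : p = 0 := by
  by_contra hp0
  have hpos : 0 < ∫ x in Ioc a b, p.eval x := by
    rw [setIntegral_pos_iff_support_of_nonneg_ae
      ((ae_restrict_iff' measurableSet_Ioc).2 (ae_of_all _ hp)) p.continuous.integrableOn_Ioc]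
    calc (0 : ENNReal) < volume (Ioc a b \ {x | p.IsRoot x}) := by
          rw [measure_sdiff_null ((finite_setOfPred_isRoot hp0).measure_zero _)]
          simp [hab]
      _ ≤ volume ((Function.support fun x => p.eval x) ∩ Ioc a b) :=
          measure_mono fun x hx => ⟨hx.2, hx.1⟩
  rw [intervalIntegral.integral_of_le hab.le] at h
  exact hpos.ne' h

theorem eq_of_forall_integral_mul_eq {a b : ℝ} (hab : a < b) {n : ℕ} {p q : ℝ[X]}
    (hp : p.natDegree ≤ n) (hq : q.natDegree ≤ n)
    (h : ∀ g : ℝ[X], g.natDegree ≤ n →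
      ∫ x in a..b, p.eval x * g.eval x = ∫ x in a..b, q.eval x * g.eval x) :
    p = q := by
  have hpq := h (p - q) ((natDegree_sub_le_of_le hp hq).trans (max_self n).le)
  rw [← sub_eq_zero, ← intervalIntegral.integral_sub
    (Continuous.intervalIntegrable (by fun_prop) _ _)
    (Continuous.intervalIntegrable (by fun_prop) _ _)] at hpq
  have hsq : (p - q) * (p - q) = 0 := by
    refine eq_zero_of_integral_eq_zero_of_nonneg hab
      (fun x _ => by simpa using mul_self_nonneg ((p - q).eval x)) ?_
    simpa only [eval_mul, eval_sub, sub_mul] using hpq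
  exact sub_eq_zero.1 (mul_self_eq_zero.1 hsq)

theorem derivative_eq_zero_of_forall_integral_mul_derivative {a b : ℝ} (hab : a < b) {n : ℕ}
    {u : ℝ[X]} (hu : u.natDegree ≤ n)
    (h : ∀ f : ℝ[X], f.natDegree ≤ n + 1 → f.eval a = 0 → f.eval b = 0 →
      ∫ x in a..b, u.eval x * (derivative f).eval x = 0) :
    derivative u = 0 := by
  set w : ℝ[X] := (X - C a) * (C b - X) with hw_def
  have hdeg : (w * derivative u).natDegree ≤ n + 1 := by
    rcases Nat.eq_zero_or_pos u.natDegree with h0 | h0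
    · simp [derivative_of_natDegree_zero h0]
    · have hw : w.natDegree ≤ 2 := by rw [hw_def]; compute_degree
      have := natDegree_derivative_le u
      exact natDegree_mul_le_of_le hw this |>.trans (by omega)
  have hibp := intervalIntegral.integral_mul_deriv_eq_deriv_mul (a := a) (b := b)
    (fun x _ => u.hasDerivAt x) (fun x _ => (w * derivative u).hasDerivAt x)
    ((derivative u).continuous.intervalIntegrable _ _)
    ((derivative (w * derivative u)).continuous.intervalIntegrable _ _)
  rw [h _ hdeg (by simp [w]) (by simp [w])] at hibp
  have hzero : w * (derivative u * derivative u) = 0 := by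
    refine eq_zero_of_integral_eq_zero_of_nonneg hab (fun x hx => ?_) ?_
    · have : 0 ≤ w.eval x := by
        simp only [w, eval_mul, eval_sub, eval_X, eval_C]
        nlinarith [hx.1, hx.2]
      simpa [mul_assoc] using mul_nonneg this (mul_self_nonneg ((derivative u).eval x))
    · simp only [w, eval_mul, eval_sub, eval_X, eval_C] at hibp ⊢
      simp only [sub_self, mul_zero, zero_mul, zero_sub, zero_eq_neg] at hibp
      rw [← hibp]
      exact intervalIntegral.integral_congr fun x _ => by ring
  have hw0 : w ≠ 0 := mul_ne_zero (X_sub_C_ne_zero a) (by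
    rw [← neg_sub]; exact neg_ne_zero.2 (X_sub_C_ne_zero b))
  exact mul_self_eq_zero.1 ((mul_eq_zero.1 hzero).resolve_left hw0)

theorem eq_C_of_forall_integral_mul_derivative {a b : ℝ} (hab : a < b) {n : ℕ} {u : ℝ[X]}
    (hu : u.natDegree ≤ n) {α β : ℝ}
    (h : ∀ f : ℝ[X], f.natDegree ≤ n + 1 →
      ∫ x in a..b, u.eval x * (derivative f).eval x = f.eval b * β - f.eval a * α) :
    u = C α ∧ β = α := by
  have hu' := derivative_eq_zero_of_forall_integral_mul_derivative hab hu
    fun f hf ha hb => by rw [h f hf, ha, hb]; ring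
  rw [eq_C_of_derivative_eq_zero hu'] at h ⊢
  have h1 := h 1 (by simp)
  have hX := h X (by simp)
  simp only [eval_C, eval_one, eval_X, derivative_one, derivative_X, eval_zero, mul_zero, mul_one,
    intervalIntegral.integral_zero, intervalIntegral.integral_const, smul_eq_mul] at h1 hX
  have hβ : β = α := by linarith
  refine ⟨congrArg C (mul_left_cancel₀ (sub_pos.2 hab).ne' ?_), hβ⟩
  rw [hX, hβ]
  ring

end Polynomial

theorem eq_trace_of_forall_integral_derivative_mul {n : ℕ} {a b c d : ℝ} (hab : a < b)
    (hcd : c < d) {V : ℝ → ℝ → ℝ}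
    (hslice : ∀ x, ∃ P : ℝ[X], P.natDegree ≤ n ∧ ∀ y, P.eval y = V x y)
    (hmoment : ∀ g : ℝ[X], ∃ P : ℝ[X], P.natDegree ≤ n ∧
      ∀ x, P.eval x = ∫ y in c..d, V x y * g.eval y)
    {A B : ℝ[X]} (hA : A.natDegree ≤ n) (hB : B.natDegree ≤ n)
    (H : ∀ f g : ℝ[X], f.natDegree ≤ n + 1 → g.natDegree ≤ n →
      ∫ x in a..b, ∫ y in c..d, V x y * ((derivative f).eval x * g.eval y)
        = f.eval b * (∫ y in c..d, B.eval y * g.eval y)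
          - f.eval a * ∫ y in c..d, A.eval y * g.eval y) :
    (∀ x y, V x y = A.eval y) ∧ B = A := by
  have hmoments : ∀ g : ℝ[X], g.natDegree ≤ n →
      (∀ x, ∫ y in c..d, V x y * g.eval y = ∫ y in c..d, A.eval y * g.eval y) ∧
        ∫ y in c..d, B.eval y * g.eval y = ∫ y in c..d, A.eval y * g.eval y := by
    intro g hg
    obtain ⟨P, hP, hPV⟩ := hmoment g
    have hPC := eq_C_of_forall_integral_mul_derivative hab hP fun f hf => by
      rw [← H f g hf hg]
      refine intervalIntegral.integral_congr fun x _ => ?_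
      rw [hPV x, ← intervalIntegral.integral_mul_const]
      exact intervalIntegral.integral_congr fun y _ => by ring
    exact ⟨fun x => by rw [← hPV x, hPC.1, Polynomial.eval_C], hPC.2⟩
  refine ⟨fun x y => ?_, eq_of_forall_integral_mul_eq hcd hB hA fun g hg => (hmoments g hg).2⟩
  obtain ⟨P, hP, hPV⟩ := hslice x
  have hPA : P = A := eq_of_forall_integral_mul_eq hcd hP hA fun g hg => by
    simp_rw [hPV]
    exact (hmoments g hg).1 x
  rw [← hPV, hPA]

theorem MvPolynomial.hasDerivAt_eval_update {σ : Type*} [DecidableEq σ] (p : MvPolynomial σ ℝ)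
    (v : σ → ℝ) (i : σ) (t : ℝ) :
    HasDerivAt (fun s => eval (Function.update v i s) p)
      (eval (Function.update v i t) (pderiv i p)) t := by
  induction p using MvPolynomial.induction_on with
  | C a => simpa using hasDerivAt_const t a
  | add p q hp hq =>
    simp only [map_add]
    exact hp.fun_add hq
  | mul_X p k hp =>
    have hk : HasDerivAt (fun s => Function.update v i s k) (if k = i then 1 else 0) t := by
      by_cases hki : k = i
      · subst hki; simpa using hasDerivAt_id' t
      · simpa [hki] using hasDerivAt_const t (v k)
    simp only [map_mul, eval_X]
    refine (hp.fun_mul hk).congr_deriv ?_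
    by_cases hki : k = i <;> simp [Derivation.leibniz, pderiv_X, hki] <;> ring

theorem Polynomial.pderiv_toMvPolynomial_self {σ R : Type*} [CommSemiring R] (f : R[X]) (i : σ) :
    pderiv i (f.toMvPolynomial i) = (derivative f).toMvPolynomial i := by
  classical
  simp [toMvPolynomial]

theorem Polynomial.pderiv_toMvPolynomial_of_ne {σ R : Type*} [CommSemiring R] (f : R[X])
    {i k : σ} (h : k ≠ i) : pderiv k (f.toMvPolynomial i) = 0 := by
  classical
  simp [toMvPolynomial, pderiv_X, h]

theorem Polynomial.degreeOf_toMvPolynomial_le {σ R : Type*} [CommSemiring R] [Nontrivial R]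
    [DecidableEq σ] (f : R[X]) (i k : σ) :
    (f.toMvPolynomial i).degreeOf k ≤ if k = i then f.natDegree else 0 := by
  nth_rw 1 [f.as_sum_range_C_mul_X_pow]
  simp only [map_sum, map_mul, map_pow, toMvPolynomial_C, toMvPolynomial_X]
  refine (degreeOf_sum_le _ _ _).trans (Finset.sup_le fun n hn => ?_)
  refine (degreeOf_C_mul_le _ _ _).trans ?_
  split_ifs with h
  · rw [h, degreeOf_X_self_pow]
    exact Nat.lt_succ_iff.1 (Finset.mem_range.1 hn)
  · rw [degreeOf_X_pow_of_ne _ h]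

theorem setIntegral_Icc_prod_Icc {F : ℝ × ℝ → ℝ} (hF : Continuous F) {x₀ x₁ y₀ y₁ : ℝ}
    (hx : x₀ ≤ x₁) (hy : y₀ ≤ y₁) :
    ∫ z in Icc x₀ x₁ ×ˢ Icc y₀ y₁, F z = ∫ x in x₀..x₁, ∫ y in y₀..y₁, F (x, y) := by
  rw [Measure.volume_eq_prod, setIntegral_prod _
    (hF.continuousOn.integrableOn_compact (isCompact_Icc.prod isCompact_Icc)),
    intervalIntegral.integral_of_le hx, ← integral_Icc_eq_integral_Ioc]
  refine setIntegral_congr_fun measurableSet_Icc fun x _ => ?_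
  rw [intervalIntegral.integral_of_le hy, ← integral_Icc_eq_integral_Ioc]

theorem setIntegral_Icc_prod_Icc_swap {F : ℝ × ℝ → ℝ} (hF : Continuous F) {x₀ x₁ y₀ y₁ : ℝ}
    (hx : x₀ ≤ x₁) (hy : y₀ ≤ y₁) :
    ∫ z in Icc x₀ x₁ ×ˢ Icc y₀ y₁, F z = ∫ y in y₀..y₁, ∫ x in x₀..x₁, F (x, y) := by
  rw [Measure.volume_eq_prod, ← setIntegral_prod_swap, ← Measure.volume_eq_prod]
  exact setIntegral_Icc_prod_Icc (F := fun z => F z.swap) (hF.comp continuous_swap) hy hx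

theorem intervalIntegral.integral_mul_mul_const (P F : ℝ → ℝ) (r a b : ℝ) :
    ∫ t in a..b, P t * (F t * r) = r * ∫ t in a..b, P t * F t := by
  rw [← intervalIntegral.integral_const_mul]
  exact intervalIntegral.integral_congr fun t _ => by ring

theorem evalP_add (p q : Poly2) (x y : ℝ) : evalP (p + q) x y = evalP p x y + evalP q x y :=
  map_add _ _ _

theorem evalP_mul (p q : Poly2) (x y : ℝ) : evalP (p * q) x y = evalP p x y * evalP q x y :=
  map_mul _ _ _

theorem evalP_zero (x y : ℝ) : evalP 0 x y = 0 :=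
  map_zero _

theorem evalP_toMvPolynomial_zero (f : ℝ[X]) (x y : ℝ) :
    evalP (f.toMvPolynomial 0) x y = f.eval x := by
  simp [evalP]

theorem evalP_toMvPolynomial_one (f : ℝ[X]) (x y : ℝ) :
    evalP (f.toMvPolynomial 1) x y = f.eval y := by
  simp [evalP]

theorem continuous_evalP (p : Poly2) : Continuous fun z : ℝ × ℝ => evalP p z.1 z.2 :=
  (continuous_eval p).comp (by fun_prop)

theorem hasDerivAt_evalP_fst (p : Poly2) (x y : ℝ) :
    HasDerivAt (fun s => evalP p s y) (evalP (pderiv 0 p) x y) x := by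
  have hv : ∀ s, Function.update ![x, y] 0 s = ![s, y] := fun s => by
    funext k; fin_cases k <;> simp
  simpa only [evalP, hv] using MvPolynomial.hasDerivAt_eval_update p ![x, y] 0 x

theorem hasDerivAt_evalP_snd (p : Poly2) (x y : ℝ) :
    HasDerivAt (fun s => evalP p x s) (evalP (pderiv 1 p) x y) y := by
  have hv : ∀ s, Function.update ![x, y] 1 s = ![x, s] := fun s => by
    funext k; fin_cases k <;> simp
  simpa only [evalP, hv] using MvPolynomial.hasDerivAt_eval_update p ![x, y] 1 y

theorem continuous_evalP_fst (p : Poly2) (y : ℝ) : Continuous fun x => evalP p x y :=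
  continuous_iff_continuousAt.2 fun x => (hasDerivAt_evalP_fst p x y).continuousAt

theorem continuous_evalP_snd (p : Poly2) (x : ℝ) : Continuous fun y => evalP p x y :=
  continuous_iff_continuousAt.2 fun y => (hasDerivAt_evalP_snd p x y).continuousAt

theorem evalP_eq_sum (p : Poly2) (x y : ℝ) :
    evalP p x y = ∑ d ∈ p.support, coeff d p * (x ^ d 0 * y ^ d 1) := by
  simp [evalP, eval_eq', Fin.prod_univ_two]

theorem exists_natDegree_le_degreeOf_eval_eq_sum (p : Poly2) (i : Fin 2)
    (μ : (Fin 2 →₀ ℕ) → ℝ) :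
    ∃ P : ℝ[X], P.natDegree ≤ p.degreeOf i ∧
      ∀ t, P.eval t = ∑ d ∈ p.support, coeff d p * μ d * t ^ d i := by
  refine ⟨∑ d ∈ p.support, Polynomial.C (coeff d p * μ d) * Polynomial.X ^ d i,
    natDegree_sum_le_of_forall_le _ _ fun d hd => ?_, fun t => by simp [eval_finsetSum]⟩
  exact (natDegree_C_mul_X_pow_le _ _).trans (le_degreeOf_of_mem_support i hd)

theorem exists_polynomial_eq_evalP_fst (p : Poly2) (y : ℝ) :
    ∃ P : ℝ[X], P.natDegree ≤ p.degreeOf 0 ∧ ∀ x, P.eval x = evalP p x y := by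
  obtain ⟨P, hP, hPeval⟩ := exists_natDegree_le_degreeOf_eval_eq_sum p 0 fun d => y ^ d 1
  refine ⟨P, hP, fun x => ?_⟩
  rw [hPeval, evalP_eq_sum]
  exact Finset.sum_congr rfl fun d _ => by ring

theorem exists_polynomial_eq_evalP_snd (p : Poly2) (x : ℝ) :
    ∃ P : ℝ[X], P.natDegree ≤ p.degreeOf 1 ∧ ∀ y, P.eval y = evalP p x y := by
  obtain ⟨P, hP, hPeval⟩ := exists_natDegree_le_degreeOf_eval_eq_sum p 1 fun d => x ^ d 0
  refine ⟨P, hP, fun y => ?_⟩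
  rw [hPeval, evalP_eq_sum]
  exact Finset.sum_congr rfl fun d _ => by ring

theorem exists_polynomial_eq_integral_evalP_mul_fst (p : Poly2) {g : ℝ → ℝ} (hg : Continuous g)
    (c d : ℝ) :
    ∃ P : ℝ[X], P.natDegree ≤ p.degreeOf 0 ∧
      ∀ x, P.eval x = ∫ y in c..d, evalP p x y * g y := by
  obtain ⟨P, hP, hPeval⟩ := exists_natDegree_le_degreeOf_eval_eq_sum p 0
    fun m => ∫ y in c..d, y ^ m 1 * g y
  refine ⟨P, hP, fun x => ?_⟩
  simp_rw [hPeval, evalP_eq_sum, Finset.sum_mul]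
  rw [intervalIntegral.integral_finsetSum
    fun m _ => Continuous.intervalIntegrable (by fun_prop) _ _]
  refine Finset.sum_congr rfl fun m _ => ?_
  simp only [← intervalIntegral.integral_const_mul, ← intervalIntegral.integral_mul_const]
  exact intervalIntegral.integral_congr fun y _ => by ring

theorem exists_polynomial_eq_integral_evalP_mul_snd (p : Poly2) {f : ℝ → ℝ} (hf : Continuous f)
    (a b : ℝ) :
    ∃ P : ℝ[X], P.natDegree ≤ p.degreeOf 1 ∧
      ∀ y, P.eval y = ∫ x in a..b, evalP p x y * f x := by
  obtain ⟨P, hP, hPeval⟩ := exists_natDegree_le_degreeOf_eval_eq_sum p 1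
    fun m => ∫ x in a..b, x ^ m 0 * f x
  refine ⟨P, hP, fun y => ?_⟩
  simp_rw [hPeval, evalP_eq_sum, Finset.sum_mul]
  rw [intervalIntegral.integral_finsetSum
    fun m _ => Continuous.intervalIntegrable (by fun_prop) _ _]
  refine Finset.sum_congr rfl fun m _ => ?_
  simp only [← intervalIntegral.integral_const_mul, ← intervalIntegral.integral_mul_const]
  exact intervalIntegral.integral_congr fun x _ => by ring

theorem memQ_toMvPolynomial_mul {r s : ℕ} {f g : ℝ[X]} (hf : f.natDegree ≤ r)
    (hg : g.natDegree ≤ s) : memQ r s (f.toMvPolynomial 0 * g.toMvPolynomial 1) := by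
  have hf₀ := f.degreeOf_toMvPolynomial_le (σ := Fin 2) 0 0
  have hf₁ := f.degreeOf_toMvPolynomial_le (σ := Fin 2) 0 1
  have hg₀ := g.degreeOf_toMvPolynomial_le (σ := Fin 2) 1 0
  have hg₁ := g.degreeOf_toMvPolynomial_le (σ := Fin 2) 1 1
  simp at hf₀ hf₁ hg₀ hg₁
  exact ⟨(degreeOf_mul_le _ _ _).trans (by omega), (degreeOf_mul_le _ _ _).trans (by omega)⟩

theorem integral_evalP_divP {x₀ x₁ y₀ y₁ : ℝ} (hx : x₀ ≤ x₁) (hy : y₀ ≤ y₁) (q : Poly2 × Poly2) :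
    ∫ z in Icc x₀ x₁ ×ˢ Icc y₀ y₁, evalP (divP q) z.1 z.2
      = (∫ y in y₀..y₁, (evalP q.1 x₁ y - evalP q.1 x₀ y))
        + ∫ x in x₀..x₁, (evalP q.2 x y₁ - evalP q.2 x y₀) := by
  have hK : IsCompact (Icc x₀ x₁ ×ˢ Icc y₀ y₁) := isCompact_Icc.prod isCompact_Icc
  simp only [divP, evalP_add]
  rw [integral_add (f := fun z : ℝ × ℝ => evalP (pderiv 0 q.1) z.1 z.2)
    ((continuous_evalP _).continuousOn.integrableOn_compact hK)
    ((continuous_evalP _).continuousOn.integrableOn_compact hK),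
    setIntegral_Icc_prod_Icc_swap (continuous_evalP _) hx hy,
    setIntegral_Icc_prod_Icc (continuous_evalP _) hx hy]
  congr 1
  · exact intervalIntegral.integral_congr fun y _ => intervalIntegral.integral_eq_sub_of_hasDerivAt
      (fun x _ => hasDerivAt_evalP_fst _ x y)
      ((continuous_evalP_fst _ y).intervalIntegrable _ _)
  · exact intervalIntegral.integral_congr fun x _ => intervalIntegral.integral_eq_sub_of_hasDerivAt
      (fun y _ => hasDerivAt_evalP_snd _ x y)
      ((continuous_evalP_snd _ x).intervalIntegrable _ _)

def weakGradPairing (x₀ x₁ y₀ y₁ : ℝ) (v₀ : Poly2) (vb₁ vb₂ vb₃ vb₄ : ℝ[X])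
    (q : Poly2 × Poly2) : ℝ :=
  -(∫ z in Set.Icc x₀ x₁ ×ˢ Set.Icc y₀ y₁, evalP v₀ z.1 z.2 * evalP (divP q) z.1 z.2)
    + ((∫ y in y₀..y₁, vb₁.eval y * (-(evalP q.1 x₀ y)))
      + (∫ y in y₀..y₁, vb₂.eval y * evalP q.1 x₁ y)
      + (∫ x in x₀..x₁, vb₃.eval x * (-(evalP q.2 x y₀)))
      + (∫ x in x₀..x₁, vb₄.eval x * evalP q.2 x y₁))

theorem weakGradPairing_tensor_zero {x₀ x₁ y₀ y₁ : ℝ} (hx : x₀ ≤ x₁) (hy : y₀ ≤ y₁) (v₀ : Poly2)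
    (vb₁ vb₂ vb₃ vb₄ f g : ℝ[X]) :
    weakGradPairing x₀ x₁ y₀ y₁ v₀ vb₁ vb₂ vb₃ vb₄ (f.toMvPolynomial 0 * g.toMvPolynomial 1, 0)
      = -(∫ x in x₀..x₁, ∫ y in y₀..y₁, evalP v₀ x y * ((derivative f).eval x * g.eval y))
        + (f.eval x₁ * (∫ y in y₀..y₁, vb₂.eval y * g.eval y)
          - f.eval x₀ * ∫ y in y₀..y₁, vb₁.eval y * g.eval y) := by
  have hdiv : divP (f.toMvPolynomial 0 * g.toMvPolynomial 1, 0)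
      = (derivative f).toMvPolynomial 0 * g.toMvPolynomial 1 := by
    simp [divP, Derivation.leibniz, pderiv_toMvPolynomial_self, pderiv_toMvPolynomial_of_ne,
      mul_comm]
  rw [weakGradPairing, hdiv, setIntegral_Icc_prod_Icc ?_ hx hy]
  · simp only [evalP_mul, evalP_zero, evalP_toMvPolynomial_zero, evalP_toMvPolynomial_one, mul_neg,
      intervalIntegral.integral_neg, mul_comm (f.eval x₀), mul_comm (f.eval x₁),
      intervalIntegral.integral_mul_mul_const, neg_zero, mul_zero, intervalIntegral.integral_zero,
      add_zero]
    ring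
  · exact (continuous_evalP _).mul (continuous_evalP _)

theorem weakGradPairing_zero_tensor {x₀ x₁ y₀ y₁ : ℝ} (hx : x₀ ≤ x₁) (hy : y₀ ≤ y₁) (v₀ : Poly2)
    (vb₁ vb₂ vb₃ vb₄ f g : ℝ[X]) :
    weakGradPairing x₀ x₁ y₀ y₁ v₀ vb₁ vb₂ vb₃ vb₄ (0, f.toMvPolynomial 0 * g.toMvPolynomial 1)
      = -(∫ y in y₀..y₁, ∫ x in x₀..x₁, evalP v₀ x y * ((derivative g).eval y * f.eval x))
        + (g.eval y₁ * (∫ x in x₀..x₁, vb₄.eval x * f.eval x)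
          - g.eval y₀ * ∫ x in x₀..x₁, vb₃.eval x * f.eval x) := by
  have hdiv : divP (0, f.toMvPolynomial 0 * g.toMvPolynomial 1)
      = f.toMvPolynomial 0 * (derivative g).toMvPolynomial 1 := by
    simp [divP, Derivation.leibniz, pderiv_toMvPolynomial_self, pderiv_toMvPolynomial_of_ne]
  rw [weakGradPairing, hdiv, setIntegral_Icc_prod_Icc_swap ?_ hx hy]
  · simp only [evalP_mul, evalP_zero, evalP_toMvPolynomial_zero, evalP_toMvPolynomial_one, mul_neg,
      intervalIntegral.integral_neg, mul_comm (f.eval _) ((derivative g).eval _),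
      intervalIntegral.integral_mul_mul_const, neg_zero, mul_zero, intervalIntegral.integral_zero,
      add_zero]
    ring
  · exact (continuous_evalP _).mul (continuous_evalP _)

theorem weakGradPairing_eq_zero_of_eq_const {x₀ x₁ y₀ y₁ : ℝ} (hx : x₀ ≤ x₁) (hy : y₀ ≤ y₁)
    {v₀ : Poly2} {vb₁ vb₂ vb₃ vb₄ : ℝ[X]} {c : ℝ}
    (hv₀ : ∀ x y, (x, y) ∈ Icc x₀ x₁ ×ˢ Icc y₀ y₁ → evalP v₀ x y = c)
    (h₁ : ∀ y ∈ Icc y₀ y₁, vb₁.eval y = c) (h₂ : ∀ y ∈ Icc y₀ y₁, vb₂.eval y = c)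
    (h₃ : ∀ x ∈ Icc x₀ x₁, vb₃.eval x = c) (h₄ : ∀ x ∈ Icc x₀ x₁, vb₄.eval x = c)
    (q : Poly2 × Poly2) :
    weakGradPairing x₀ x₁ y₀ y₁ v₀ vb₁ vb₂ vb₃ vb₄ q = 0 := by
  have edge : ∀ {P : ℝ[X]} {a b : ℝ} (F : ℝ → ℝ), a ≤ b → (∀ t ∈ Icc a b, P.eval t = c) →
      ∫ t in a..b, P.eval t * F t = c * ∫ t in a..b, F t := fun F hab hP => by
    rw [← intervalIntegral.integral_const_mul]
    refine intervalIntegral.integral_congr fun t ht => ?_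
    rw [uIcc_of_le hab] at ht
    simp only [hP t ht]
  have bulk : ∫ z in Icc x₀ x₁ ×ˢ Icc y₀ y₁, evalP v₀ z.1 z.2 * evalP (divP q) z.1 z.2
      = c * ∫ z in Icc x₀ x₁ ×ˢ Icc y₀ y₁, evalP (divP q) z.1 z.2 := by
    rw [← integral_const_mul]
    exact setIntegral_congr_fun (measurableSet_Icc.prod measurableSet_Icc)
      fun z hz => by rw [hv₀ z.1 z.2 hz]
  have hint : ∀ (p : Poly2) (a b t : ℝ), IntervalIntegrable (fun s => evalP p s t) volume a b ∧
      IntervalIntegrable (fun s => evalP p t s) volume a b := fun p a b t =>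
    ⟨(continuous_evalP_fst p t).intervalIntegrable a b,
      (continuous_evalP_snd p t).intervalIntegrable a b⟩
  rw [weakGradPairing, bulk, integral_evalP_divP hx hy, edge _ hy h₁, edge _ hy h₂, edge _ hx h₃,
    edge _ hx h₄, intervalIntegral.integral_neg, intervalIntegral.integral_neg,
    intervalIntegral.integral_sub (hint _ _ _ _).2 (hint _ _ _ _).2,
    intervalIntegral.integral_sub (hint _ _ _ _).1 (hint _ _ _ _).1]
  ring

theorem evalP_eq_left_trace_of_weakGradPairing_eq_zero {j : ℕ} {x₀ x₁ y₀ y₁ : ℝ} (hx : x₀ < x₁)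
    (hy : y₀ < y₁) {v₀ : Poly2} (hv₀ : memQ j j v₀) {vb₁ vb₂ : ℝ[X]} (vb₃ vb₄ : ℝ[X])
    (h₁ : vb₁.natDegree ≤ j) (h₂ : vb₂.natDegree ≤ j)
    (H : ∀ q, memRT j q → weakGradPairing x₀ x₁ y₀ y₁ v₀ vb₁ vb₂ vb₃ vb₄ q = 0) :
    (∀ x y, evalP v₀ x y = vb₁.eval y) ∧ vb₂ = vb₁ :=
  eq_trace_of_forall_integral_derivative_mul hx hy
    (fun x => (exists_polynomial_eq_evalP_snd v₀ x).imp fun _ hP => ⟨hP.1.trans hv₀.2, hP.2⟩)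
    (fun g => (exists_polynomial_eq_integral_evalP_mul_fst v₀ g.continuous y₀ y₁).imp
      fun _ hP => ⟨hP.1.trans hv₀.1, hP.2⟩) h₁ h₂
    fun f g hf hg => by
      have := H (f.toMvPolynomial 0 * g.toMvPolynomial 1, 0)
        ⟨memQ_toMvPolynomial_mul hf hg, by simp [memQ]⟩
      rw [weakGradPairing_tensor_zero hx.le hy.le] at this
      linarith

theorem evalP_eq_bottom_trace_of_weakGradPairing_eq_zero {j : ℕ} {x₀ x₁ y₀ y₁ : ℝ}
    (hx : x₀ < x₁) (hy : y₀ < y₁) {v₀ : Poly2} (hv₀ : memQ j j v₀) (vb₁ vb₂ : ℝ[X])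
    {vb₃ vb₄ : ℝ[X]} (h₃ : vb₃.natDegree ≤ j) (h₄ : vb₄.natDegree ≤ j)
    (H : ∀ q, memRT j q → weakGradPairing x₀ x₁ y₀ y₁ v₀ vb₁ vb₂ vb₃ vb₄ q = 0) :
    (∀ x y, evalP v₀ x y = vb₃.eval x) ∧ vb₄ = vb₃ := by
  obtain ⟨hv, hvb⟩ := eq_trace_of_forall_integral_derivative_mul (V := fun y x => evalP v₀ x y)
    hy hx
    (fun y => (exists_polynomial_eq_evalP_fst v₀ y).imp fun _ hP => ⟨hP.1.trans hv₀.1, hP.2⟩)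
    (fun f => (exists_polynomial_eq_integral_evalP_mul_snd v₀ f.continuous x₀ x₁).imp
      fun _ hP => ⟨hP.1.trans hv₀.2, hP.2⟩) h₃ h₄
    fun g f hg hf => by
      have := H (0, f.toMvPolynomial 0 * g.toMvPolynomial 1)
        ⟨by simp [memQ], memQ_toMvPolynomial_mul hf hg⟩
      rw [weakGradPairing_zero_tensor hx.le hy.le] at this
      linarith
  exact ⟨fun x y => hv y x, hvb⟩

/-- On the rectangle `K = [x₀,x₁] × [y₀,y₁]`, for `v₀ ∈ Q_j` and edge
polynomials `v_{b,m}` of degree `≤ j`, the weak gradient functional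
`q ↦ -∫_K v₀ div q + ∑_m ∫_{F_m} v_{b,m} (q·n_m)` vanishes on all of `RT_j(K)` iff
`v₀` and all the `v_{b,m}` are the same constant on `K` and its edges. -/
theorem statement0 (j : ℕ) (x₀ x₁ y₀ y₁ : ℝ) (hx : x₀ < x₁) (hy : y₀ < y₁)
    (v₀ : Poly2) (hv₀ : memQ j j v₀)
    (vb₁ vb₂ vb₃ vb₄ : Polynomial ℝ)
    (h₁ : vb₁.natDegree ≤ j) (h₂ : vb₂.natDegree ≤ j)
    (h₃ : vb₃.natDegree ≤ j) (h₄ : vb₄.natDegree ≤ j) :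
    (∀ q : Poly2 × Poly2, memRT j q →
      (-(∫ z in Set.Icc x₀ x₁ ×ˢ Set.Icc y₀ y₁, evalP v₀ z.1 z.2 * evalP (divP q) z.1 z.2)
        + ((∫ y in y₀..y₁, vb₁.eval y * (-(evalP q.1 x₀ y)))
          + (∫ y in y₀..y₁, vb₂.eval y * evalP q.1 x₁ y)
          + (∫ x in x₀..x₁, vb₃.eval x * (-(evalP q.2 x y₀)))
          + (∫ x in x₀..x₁, vb₄.eval x * evalP q.2 x y₁)) = 0))
    ↔ (∃ c : ℝ, (∀ x y, (x, y) ∈ Set.Icc x₀ x₁ ×ˢ Set.Icc y₀ y₁ → evalP v₀ x y = c)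
        ∧ (∀ y ∈ Set.Icc y₀ y₁, vb₁.eval y = c)
        ∧ (∀ y ∈ Set.Icc y₀ y₁, vb₂.eval y = c)
        ∧ (∀ x ∈ Set.Icc x₀ x₁, vb₃.eval x = c)
        ∧ (∀ x ∈ Set.Icc x₀ x₁, vb₄.eval x = c)) := by
  change (∀ q, memRT j q → weakGradPairing x₀ x₁ y₀ y₁ v₀ vb₁ vb₂ vb₃ vb₄ q = 0) ↔ _
  refine ⟨fun H => ?_, fun ⟨c, hc⟩ q _ =>
    weakGradPairing_eq_zero_of_eq_const hx.le hy.le hc.1 hc.2.1 hc.2.2.1 hc.2.2.2.1 hc.2.2.2.2 q⟩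
  obtain ⟨hv_left, hvb₂⟩ := evalP_eq_left_trace_of_weakGradPairing_eq_zero hx hy hv₀ vb₃ vb₄ h₁ h₂ H
  obtain ⟨hv_bottom, hvb₄⟩ :=
    evalP_eq_bottom_trace_of_weakGradPairing_eq_zero hx hy hv₀ vb₁ vb₂ h₃ h₄ H
  have hconst : ∀ x y, evalP v₀ x y = vb₃.eval x₀ := fun x y => by
    rw [hv_left, ← hv_left x₀, hv_bottom]
  refine ⟨vb₃.eval x₀, fun x y _ => hconst x y, fun y _ => ?_, fun y _ => ?_, fun x _ => ?_,
    fun x _ => ?_⟩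
  · rw [← hv_left x₀, hconst]
  · rw [hvb₂, ← hv_left x₀, hconst]
  · rw [← hv_bottom x y₀, hconst]
  · rw [hvb₄, ← hv_bottom x y₀, hconst]
end
end

section
/- For i ∈ {1,2,3} define χ_i : ℝ² → ℝ² by χ_i(x) = (|e_i|/(2|K|))(x − v_i). Then for each i ∈ {1,2,3}, with {j,k} = {1,2,3}∖{i}, ∫_K χ_i·χ_i dx = |e_i|²(3(l_j + l_k) − l_i)/(48|K|), and for i ≠ j, with k the remaining index, ∫_K χ_i·χ_j dx = |e_i||e_j|(l_i + l_j − 3 l_k)/(48|K|), where the integrals are taken with respect to two-dimensional Lebesgue measure on the triangle K. -/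
/-!
The affine map `u ↦ v₀ + u₀ (v₁ - v₀) + u₁ (v₂ - v₀)` carries the reference triangle
`{u | 0 ≤ u₀, 0 ≤ u₁, u₀ + u₁ ≤ 1}` of area `1/2` onto `K`, so its Jacobian is `±2|K|`. Pulled
back, `χ_i · χ_j` is a quadratic polynomial in `u`, and the moments `1/2, 1/6, 1/12, 1/24` of the
reference triangle give `∫_K ⟪x - p, x - q⟫` in closed form. At `p = v_i`, `q = v_j` the inner
products of edge vectors that appear are turned into squared edge lengths by polarization.
-/

open MeasureTheory Set
open scoped RealInnerProductSpace

section AffineChangeOfVariables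

variable {E : Type*} [NormedAddCommGroup E] [NormedSpace ℝ E] [FiniteDimensional ℝ E]
  [MeasurableSpace E] [BorelSpace E] (μ : Measure E) [μ.IsAddHaarMeasure]

lemma addHaar_image_continuousAffineMap (f : E →ᴬ[ℝ] E) (s : Set E) :
    μ (f '' s) = ENNReal.ofReal |f.contLinear.det| * μ s := by
  rw [f.decomp, show ⇑f.contLinear + Function.const E (f 0) = (· + f 0) ∘ f.contLinear from rfl,
    image_comp, image_add_right, measure_preimage_add_right,
    Measure.addHaar_image_continuousLinearMap]

lemma setIntegral_image_continuousAffineMap (f : E →ᴬ[ℝ] E) (hf : f.contLinear.det ≠ 0)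
    {s : Set E} (hs : MeasurableSet s) (g : E → ℝ) :
    ∫ x in f '' s, g x ∂μ = |f.contLinear.det| * ∫ x in s, g (f x) ∂μ := by
  have hinj : Function.Injective f := by
    rw [f.decomp]
    exact (add_left_injective _).comp (f.contLinear.toLinearMap.equivOfDetNeZero hf).injective
  rw [integral_image_eq_integral_abs_det_fderiv_smul μ hs (fun x _ => f.hasFDerivWithinAt)
    hinj.injOn, integral_smul, smul_eq_mul]

end AffineChangeOfVariables

lemma integral_cubic (α β γ δ c : ℝ) :
    ∫ y in (0:ℝ)..c, (α + β * y + γ * y ^ 2 + δ * y ^ 3) =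
      α * c + β * c ^ 2 / 2 + γ * c ^ 3 / 3 + δ * c ^ 4 / 4 := by
  simp (disch := apply Continuous.intervalIntegrable; fun_prop)
    [intervalIntegral.integral_add, intervalIntegral.integral_const_mul, integral_pow]
  rw [intervalIntegral.integral_const_mul]
  simp
  ring

def unitTriangle : Set (ℝ × ℝ) := {p | 0 ≤ p.1 ∧ 0 ≤ p.2 ∧ p.1 + p.2 ≤ 1}

lemma isClosed_unitTriangle : IsClosed unitTriangle :=
  (isClosed_le continuous_const continuous_fst).inter <|
    (isClosed_le continuous_const continuous_snd).inter <|
      isClosed_le (continuous_fst.add continuous_snd) continuous_const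

lemma isCompact_unitTriangle : IsCompact unitTriangle :=
  (isCompact_Icc (a := ((0 : ℝ), (0 : ℝ))) (b := (1, 1))).of_isClosed_subset
    isClosed_unitTriangle fun _ ⟨h₁, h₂, h₃⟩ =>
      ⟨Prod.le_def.2 ⟨h₁, h₂⟩, Prod.le_def.2 ⟨by linarith, by linarith⟩⟩

lemma setIntegral_unitTriangle (g : ℝ × ℝ → ℝ) (hg : Continuous g) :
    ∫ p in unitTriangle, g p = ∫ x in (0:ℝ)..1, ∫ y in (0:ℝ)..(1 - x), g (x, y) := by
  have hfiber (x : ℝ) : ∫ y, unitTriangle.indicator g (x, y) =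
      (Icc 0 1).indicator (fun x => ∫ y in (0:ℝ)..(1 - x), g (x, y)) x := by
    by_cases hx : x ∈ Icc (0:ℝ) 1
    · rw [indicator_of_mem hx, intervalIntegral.integral_of_le (by linarith [hx.2]),
        ← integral_Icc_eq_integral_Ioc, ← integral_indicator measurableSet_Icc]
      congr 1 with y
      simp only [indicator, unitTriangle, mem_ofPred_eq, mem_Icc]
      congr 1
      exact propext ⟨fun h => ⟨h.2.1, by linarith [h.2.2]⟩,
        fun h => ⟨hx.1, h.1, by linarith [h.2]⟩⟩
    · rw [indicator_of_notMem hx, ← integral_zero ℝ ℝ]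
      congr 1 with y
      exact indicator_of_notMem (fun h => hx ⟨h.1, by linarith [h.2.1, h.2.2]⟩) g
  rw [← integral_indicator isClosed_unitTriangle.measurableSet, Measure.volume_eq_prod,
    integral_prod _ ((integrable_indicator_iff isClosed_unitTriangle.measurableSet).2
      (hg.continuousOn.integrableOn_compact isCompact_unitTriangle))]
  simp_rw [hfiber]
  rw [integral_indicator measurableSet_Icc, integral_Icc_eq_integral_Ioc,
    ← intervalIntegral.integral_of_le zero_le_one]

lemma setIntegral_unitTriangle_quadratic (k₀ k₁ k₂ k₃ k₄ k₅ : ℝ) :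
    ∫ p in unitTriangle,
        (k₀ + k₁ * p.1 + k₂ * p.2 + k₃ * p.1 ^ 2 + k₄ * p.2 ^ 2 + k₅ * (p.1 * p.2)) =
      k₀ / 2 + (k₁ + k₂) / 6 + (k₃ + k₄) / 12 + k₅ / 24 := by
  rw [setIntegral_unitTriangle _ (by fun_prop)]
  have hinner (x : ℝ) :
      ∫ y in (0:ℝ)..(1 - x), (k₀ + k₁ * x + k₂ * y + k₃ * x ^ 2 + k₄ * y ^ 2 + k₅ * (x * y)) =
        (k₀ + k₂ / 2 + k₄ / 3) + (k₁ - k₀ + k₅ / 2 - k₂ - k₄) * x +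
          (k₃ - k₁ + k₂ / 2 - k₅ + k₄) * x ^ 2 + (-k₃ + k₅ / 2 - k₄ / 3) * x ^ 3 := by
    rw [intervalIntegral.integral_congr (g := fun y =>
        (k₀ + k₁ * x + k₃ * x ^ 2) + (k₂ + k₅ * x) * y + k₄ * y ^ 2 + 0 * y ^ 3)
        fun y _ => by ring, integral_cubic]
    ring
  simp_rw [hinner, integral_cubic]
  ring

local notation "ℝ²" => EuclideanSpace ℝ (Fin 2)

def refTriangle : Set ℝ² := {u | 0 ≤ u 0 ∧ 0 ≤ u 1 ∧ u 0 + u 1 ≤ 1}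

def measurableEquivProd : ℝ² ≃ᵐ ℝ × ℝ :=
  (MeasurableEquiv.toLp 2 (Fin 2 → ℝ)).symm.trans MeasurableEquiv.finTwoArrow

lemma measurePreserving_measurableEquivProd : MeasurePreserving measurableEquivProd :=
  (volume_preserving_finTwoArrow ℝ).comp
    (EuclideanSpace.volume_preserving_symm_measurableEquiv_toLp _)

lemma refTriangle_eq_preimage : refTriangle = measurableEquivProd ⁻¹' unitTriangle := rfl

lemma measurableSet_refTriangle : MeasurableSet refTriangle :=
  isClosed_unitTriangle.measurableSet.preimage measurableEquivProd.measurable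

lemma setIntegral_refTriangle_quadratic (k₀ k₁ k₂ k₃ k₄ k₅ : ℝ) :
    ∫ u in refTriangle,
        (k₀ + k₁ * u 0 + k₂ * u 1 + k₃ * u 0 ^ 2 + k₄ * u 1 ^ 2 + k₅ * (u 0 * u 1)) =
      k₀ / 2 + (k₁ + k₂) / 6 + (k₃ + k₄) / 12 + k₅ / 24 := by
  rw [refTriangle_eq_preimage]
  exact (measurePreserving_measurableEquivProd.setIntegral_preimage_emb
    measurableEquivProd.measurableEmbedding _ _).trans
      (setIntegral_unitTriangle_quadratic k₀ k₁ k₂ k₃ k₄ k₅)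

lemma volume_refTriangle : volume refTriangle = ENNReal.ofReal (1 / 2) := by
  have h := setIntegral_refTriangle_quadratic 1 0 0 0 0 0
  norm_num at h
  rw [← h, measureReal_def, ENNReal.ofReal_toReal]
  exact (measurePreserving_measurableEquivProd.measure_preimage
    isClosed_unitTriangle.measurableSet.nullMeasurableSet).trans_lt
      isCompact_unitTriangle.measure_lt_top |>.ne

lemma refTriangle_eq_convexHull :
    refTriangle = convexHull ℝ {0, EuclideanSpace.single 0 1, EuclideanSpace.single 1 1} := by
  apply subset_antisymm
  · rintro u ⟨h₀, h₁, h₂⟩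
    have hu : u = ∑ i, ![1 - u 0 - u 1, u 0, u 1] i •
        ![0, EuclideanSpace.single 0 1, EuclideanSpace.single 1 1] i := by
      ext c; fin_cases c <;> simp [Fin.sum_univ_three]
    rw [hu]
    refine (convex_convexHull ℝ _).sum_mem (fun i _ => ?_) ?_ (fun i _ => ?_)
    · fin_cases i <;> simp <;> linarith
    · simp [Fin.sum_univ_three]; ring
    · apply subset_convexHull
      fin_cases i <;> simp
  · refine convexHull_min ?_ ?_
    · rintro x (rfl | rfl | rfl) <;> simp [refTriangle]
    · rintro x ⟨hx₀, hx₁, hx₂⟩ y ⟨hy₀, hy₁, hy₂⟩ a b ha hb hab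
      simp only [refTriangle, mem_ofPred_eq, PiLp.add_apply, PiLp.smul_apply, smul_eq_mul]
      refine ⟨by positivity, by positivity, ?_⟩
      nlinarith

noncomputable def triangleParam (v : Fin 3 → ℝ²) : ℝ² →ᴬ[ℝ] ℝ² :=
  ((EuclideanSpace.proj (0 : Fin 2)).smulRight (v 1 - v 0) +
      (EuclideanSpace.proj (1 : Fin 2)).smulRight (v 2 - v 0)).toContinuousAffineMap +
    ContinuousAffineMap.const ℝ ℝ² (v 0)

lemma triangleParam_apply (v : Fin 3 → ℝ²) (u : ℝ²) :
    triangleParam v u = u 0 • (v 1 - v 0) + u 1 • (v 2 - v 0) + v 0 := rfl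

lemma range_fin_three {α : Type*} (v : Fin 3 → α) : range v = {v 0, v 1, v 2} := by
  ext; simp [Fin.exists_fin_succ, eq_comm]

lemma image_triangleParam_refTriangle (v : Fin 3 → ℝ²) :
    triangleParam v '' refTriangle = convexHull ℝ (range v) := by
  rw [refTriangle_eq_convexHull, ← ContinuousAffineMap.coe_toAffineMap,
    AffineMap.image_convexHull, range_fin_three]
  simp [image_insert_eq, triangleParam_apply]

lemma volume_convexHull_range (v : Fin 3 → ℝ²) :
    volume (convexHull ℝ (range v)) =
      ENNReal.ofReal (|(triangleParam v).contLinear.det| / 2) := by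
  rw [← image_triangleParam_refTriangle, addHaar_image_continuousAffineMap, volume_refTriangle,
    ← ENNReal.ofReal_mul (abs_nonneg _)]
  ring_nf

section TriangleMoment

variable {F : Type*} [NormedAddCommGroup F] [InnerProductSpace ℝ F]

/-- `∫_K ⟪x - p, x - q⟫ = |K| / 12 * triangleMoment v p q`, because
`∫_K λ_a λ_b = |K| (1 + δ_ab) / 12` for the barycentric coordinates `λ` of `K`. -/
def triangleMoment (v : Fin 3 → F) (p q : F) : ℝ :=
  ⟪∑ i, (v i - p), ∑ i, (v i - q)⟫ + ∑ i, ⟪v i - p, v i - q⟫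

lemma triangleMoment_vertex_self (v : Fin 3 → F) (l : Fin 3 → ℝ)
    (hl : ∀ i, l i = dist (v (i + 1)) (v (i + 2)) ^ 2) (i : Fin 3) :
    triangleMoment v (v i) (v i) = 3 * (l (i + 1) + l (i + 2)) - l i := by
  simp only [hl, dist_eq_norm, ← real_inner_self_eq_norm_sq]
  fin_cases i <;>
  · simp only [triangleMoment, Fin.sum_univ_three, Fin.reduceFinMk, Fin.reduceAdd, Fin.isValue,
      inner_sub_left, inner_sub_right, inner_add_left, inner_add_right, real_inner_comm]
    ring

lemma triangleMoment_vertex_vertex (v : Fin 3 → F) (l : Fin 3 → ℝ)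
    (hl : ∀ i, l i = dist (v (i + 1)) (v (i + 2)) ^ 2) {i j : Fin 3} (hij : i ≠ j) :
    triangleMoment v (v i) (v j) = l i + l j - 3 * l (-(i + j)) := by
  have hneg₁ : (-1 : Fin 3) = 2 := rfl
  have hneg₂ : (-2 : Fin 3) = 1 := rfl
  fin_cases i <;> fin_cases j <;> simp only [ne_eq, not_true] at hij <;>
  · simp only [Fin.reduceFinMk, Fin.reduceAdd, Fin.isValue, neg_zero, hneg₁, hneg₂]
    simp only [hl, dist_eq_norm, ← real_inner_self_eq_norm_sq, triangleMoment, Fin.sum_univ_three,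
      Fin.reduceAdd, Fin.isValue, inner_sub_left, inner_sub_right, inner_add_left,
      inner_add_right, real_inner_comm]
    ring

end TriangleMoment

lemma setIntegral_convexHull_inner_sub_sub (v : Fin 3 → ℝ²)
    (hK : volume (convexHull ℝ (range v)) ≠ 0) (p q : ℝ²) :
    ∫ x in convexHull ℝ (range v), ⟪x - p, x - q⟫ =
      volume.real (convexHull ℝ (range v)) / 12 * triangleMoment v p q := by
  set T := triangleParam v
  have hT : T.contLinear.det ≠ 0 := by
    intro h
    simp [volume_convexHull_range, T, h] at hK
  set a := v 0 - p
  set b := v 0 - q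
  set w₁ := v 1 - v 0
  set w₂ := v 2 - v 0
  have hpoint (u : ℝ²) : ⟪T u - p, T u - q⟫ =
      ⟪a, b⟫ + (⟪w₁, b⟫ + ⟪a, w₁⟫) * u 0 + (⟪w₂, b⟫ + ⟪a, w₂⟫) * u 1 + ⟪w₁, w₁⟫ * u 0 ^ 2 +
        ⟪w₂, w₂⟫ * u 1 ^ 2 + (⟪w₁, w₂⟫ + ⟪w₂, w₁⟫) * (u 0 * u 1) := by
    rw [triangleParam_apply, add_sub_assoc, add_sub_assoc]
    simp only [inner_add_left, inner_add_right, real_inner_smul_left, real_inner_smul_right]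
    ring
  have hvertex : v 1 - p = w₁ + a ∧ v 2 - p = w₂ + a ∧ v 1 - q = w₁ + b ∧ v 2 - q = w₂ + b :=
    ⟨(sub_add_sub_cancel _ _ _).symm, (sub_add_sub_cancel _ _ _).symm,
      (sub_add_sub_cancel _ _ _).symm, (sub_add_sub_cancel _ _ _).symm⟩
  rw [measureReal_def, volume_convexHull_range,
    ENNReal.toReal_ofReal (by positivity), ← image_triangleParam_refTriangle,
    setIntegral_image_continuousAffineMap volume _ hT measurableSet_refTriangle]
  simp only [hpoint, setIntegral_refTriangle_quadratic, triangleMoment, Fin.sum_univ_three,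
    hvertex.1, hvertex.2.1, hvertex.2.2.1, hvertex.2.2.2, inner_add_left, inner_add_right,
    real_inner_comm]
  ring

theorem statement9_general (v : Fin 3 → EuclideanSpace ℝ (Fin 2))
    (K : Set (EuclideanSpace ℝ (Fin 2))) (hK : K = convexHull ℝ (Set.range v))
    (areaK : ℝ) (hArea : areaK = (volume K).toReal) (hpos : 0 < areaK)
    (ℓ : Fin 3 → ℝ) (hℓ : ∀ i, ℓ i = dist (v (i + 1)) (v (i + 2)))
    (l : Fin 3 → ℝ) (hl : ∀ i, l i = ℓ i ^ 2)
    (χ : Fin 3 → EuclideanSpace ℝ (Fin 2) → EuclideanSpace ℝ (Fin 2))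
    (hχ : ∀ i x, χ i x = (ℓ i / (2 * areaK)) • (x - v i)) :
    (∀ i, (∫ x in K, ⟪χ i x, χ i x⟫)
      = ℓ i ^ 2 * (3 * (l (i + 1) + l (i + 2)) - l i) / (48 * areaK)) ∧
    (∀ i j, i ≠ j → (∫ x in K, ⟪χ i x, χ j x⟫)
      = ℓ i * ℓ j * (l i + l j - 3 * l (-(i + j))) / (48 * areaK)) := by
  subst hK
  have hl' (i : Fin 3) : l i = dist (v (i + 1)) (v (i + 2)) ^ 2 := by rw [hl, hℓ]
  have hvol : volume (convexHull ℝ (range v)) ≠ 0 := by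
    intro h
    rw [h, ENNReal.toReal_zero] at hArea
    exact hpos.ne' hArea
  have hmass (i j : Fin 3) : ∫ x in convexHull ℝ (range v), ⟪χ i x, χ j x⟫ =
      ℓ i * ℓ j * triangleMoment v (v i) (v j) / (48 * areaK) := by
    simp_rw [hχ, real_inner_smul_left, real_inner_smul_right]
    rw [integral_const_mul, integral_const_mul, setIntegral_convexHull_inner_sub_sub v hvol,
      measureReal_def, ← hArea]
    field_simp
    ring
  refine ⟨fun i => ?_, fun i j hij => ?_⟩
  · rw [hmass, triangleMoment_vertex_self v l hl', sq]
  · rw [hmass, triangleMoment_vertex_vertex v l hl' hij]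

/-- Entries of the Gram (mass) matrix of the lowest-order Raviart–Thomas
basis `χ_i(x) = (|e_i|/(2|K|)) (x − v_i)` on a nondegenerate triangle `K`:
`∫_K χ_i·χ_i = |e_i|²(3(l_j + l_k) − l_i)/(48|K|)` and, for `i ≠ j`,
`∫_K χ_i·χ_j = |e_i||e_j|(l_i + l_j − 3 l_k)/(48|K|)`, where `l_i = |e_i|²`. -/
theorem statement9 (v : Fin 3 → EuclideanSpace ℝ (Fin 2))
    (hv : AffineIndependent ℝ v)
    (K : Set (EuclideanSpace ℝ (Fin 2))) (hK : K = convexHull ℝ (Set.range v))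
    (areaK : ℝ) (hArea : areaK = (volume K).toReal) (hpos : 0 < areaK)
    (ℓ : Fin 3 → ℝ) (hℓ : ∀ i, ℓ i = dist (v (i + 1)) (v (i + 2)))
    (l : Fin 3 → ℝ) (hl : ∀ i, l i = ℓ i ^ 2)
    (χ : Fin 3 → EuclideanSpace ℝ (Fin 2) → EuclideanSpace ℝ (Fin 2))
    (hχ : ∀ i x, χ i x = (ℓ i / (2 * areaK)) • (x - v i)) :
    (∀ i, (∫ x in K, ⟪χ i x, χ i x⟫)
      = ℓ i ^ 2 * (3 * (l (i + 1) + l (i + 2)) - l i) / (48 * areaK)) ∧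
    (∀ i j, i ≠ j → (∫ x in K, ⟪χ i x, χ j x⟫)
      = ℓ i * ℓ j * (l i + l j - 3 * l (-(i + j))) / (48 * areaK)) :=
  statement9_general v K hK areaK hArea hpos ℓ hℓ l hl χ hχ
end

section
/- Let e₁, e₂, e₃ > 0 and A > 0 be real numbers with l_i := e_i² satisfying 16A² = 2(l₁l₂ + l₂l₃ + l₃l₁) − l₁² − l₂² − l₃², and set L := l₁ + l₂ + l₃. Define the 3×3 real matrix D by D_{ii} = e_i²(3(l_j + l_k) − l_i)/(48A) (with {j,k} = {1,2,3}∖{i}) and D_{ij} = e_i e_j (l_i + l_j − 3 l_k)/(48A) for i ≠ j (with k the remaining index); let Z be the column vector (e₁, e₂, e₃)ᵗ and T := diag(e₁, e₂, e₃). Then D is invertible and: (1) Zᵗ D⁻¹ Z = 144A/L; (2) Zᵗ D⁻¹ T = (48A/L)(1, 1, 1); (3) Tᵗ D⁻¹ T = (16A/L) J + (1/(2A)) S, where J is the all-ones 3×3 matrix and S := [[2l₁, l₃−l₁−l₂, l₂−l₁−l₃], [l₃−l₁−l₂, 2l₂, l₁−l₂−l₃], [l₂−l₁−l₃, l₁−l₂−l₃,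 2l₃]]. -/
/-!
With `T = diag(e₁, e₂, e₃)` the Raviart–Thomas Gram matrix factors as `D = T M T`, where `M`
depends only on `l₁, l₂, l₃` and `A`. Heron's relation is exactly what makes
`K = (16A/L) J + S/(2A)` the inverse of `M` (with denominators cleared, every entry of `M K - 1`
is a multiple of it; it also forces `L ≠ 0`), so `Tᵀ D⁻¹ T = K`. Since `Z = T 𝟙` and the rows
of `S` sum to zero, `𝟙ᵀ K = (48A/L) 𝟙ᵀ`, which gives the other two blocks.
-/

open Matrix

noncomputable section

theorem Matrix.mul_inv_sandwich_mul {n : Type*} [Fintype n] [DecidableEq n] {R : Type*}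
    [CommRing R] {T : Matrix n n R} (hT : IsUnit T.det) (M : Matrix n n R) :
    T * (T * M * T)⁻¹ * T = M⁻¹ := by
  rw [Matrix.mul_inv_rev, Matrix.mul_inv_rev, ← Matrix.mul_assoc, ← Matrix.mul_assoc,
    mul_nonsing_inv T hT, Matrix.one_mul, Matrix.mul_assoc, nonsing_inv_mul T hT, Matrix.mul_one]

def rtGramCore (l₁ l₂ l₃ A : ℝ) : Matrix (Fin 3) (Fin 3) ℝ :=
  (1 / (48 * A)) •
    !![3 * (l₂ + l₃) - l₁, l₁ + l₂ - 3 * l₃, l₁ + l₃ - 3 * l₂;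
       l₁ + l₂ - 3 * l₃, 3 * (l₁ + l₃) - l₂, l₂ + l₃ - 3 * l₁;
       l₁ + l₃ - 3 * l₂, l₂ + l₃ - 3 * l₁, 3 * (l₁ + l₂) - l₃]

def wgStiffness (l₁ l₂ l₃ A : ℝ) : Matrix (Fin 3) (Fin 3) ℝ :=
  (16 * A / (l₁ + l₂ + l₃)) • !![1, 1, 1; 1, 1, 1; 1, 1, 1]
    + (1 / (2 * A)) • !![2 * l₁, l₃ - l₁ - l₂, l₂ - l₁ - l₃;
        l₃ - l₁ - l₂, 2 * l₂, l₁ - l₂ - l₃;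
        l₂ - l₁ - l₃, l₁ - l₂ - l₃, 2 * l₃]

theorem add_add_ne_zero_of_heron {l₁ l₂ l₃ A : ℝ} (hA : A ≠ 0)
    (heron : 16 * A ^ 2 = 2 * (l₁ * l₂ + l₂ * l₃ + l₃ * l₁) - l₁ ^ 2 - l₂ ^ 2 - l₃ ^ 2) :
    l₁ + l₂ + l₃ ≠ 0 := by
  intro hL
  have : 16 * A ^ 2 = -2 * (l₁ ^ 2 + l₂ ^ 2 + l₃ ^ 2) := by
    linear_combination heron + (l₁ + l₂ + l₃) * hL
  have : 0 < A ^ 2 := by positivity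
  nlinarith [sq_nonneg l₁, sq_nonneg l₂, sq_nonneg l₃]

theorem rtGramCore_mul_wgStiffness {l₁ l₂ l₃ A : ℝ} (hA : A ≠ 0)
    (heron : 16 * A ^ 2 = 2 * (l₁ * l₂ + l₂ * l₃ + l₃ * l₁) - l₁ ^ 2 - l₂ ^ 2 - l₃ ^ 2) :
    rtGramCore l₁ l₂ l₃ A * wgStiffness l₁ l₂ l₃ A = 1 := by
  have hL := add_add_ne_zero_of_heron hA heron
  ext i j
  fin_cases i <;> fin_cases j <;>
    simp [rtGramCore, wgStiffness, Matrix.mul_apply, Fin.sum_univ_three] <;>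
    field_simp <;>
    first
      | linear_combination (-4 * (l₁ + l₂ + l₃)) * heron
      | linear_combination 2 * (l₁ + l₂ + l₃) * heron

theorem diagonal_mul_rtGramCore_mul_diagonal (e₁ e₂ e₃ l₁ l₂ l₃ A : ℝ) :
    diagonal ![e₁, e₂, e₃] * rtGramCore l₁ l₂ l₃ A * diagonal ![e₁, e₂, e₃] =
      (1 / (48 * A)) •
      !![e₁ ^ 2 * (3 * (l₂ + l₃) - l₁), e₁ * e₂ * (l₁ + l₂ - 3 * l₃), e₁ * e₃ * (l₁ + l₃ - 3 * l₂);
         e₁ * e₂ * (l₁ + l₂ - 3 * l₃), e₂ ^ 2 * (3 * (l₁ + l₃) - l₂), e₂ * e₃ * (l₂ + l₃ - 3 * l₁);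
         e₁ * e₃ * (l₁ + l₃ - 3 * l₂), e₂ * e₃ * (l₂ + l₃ - 3 * l₁), e₃ ^ 2 * (3 * (l₁ + l₂) - l₃)] := by
  ext i j
  fin_cases i <;> fin_cases j <;> simp [rtGramCore] <;> ring

theorem col_eq_diagonal_mul_ones (e₁ e₂ e₃ : ℝ) :
    !![e₁; e₂; e₃] = diagonal ![e₁, e₂, e₃] * (!![1; 1; 1] : Matrix (Fin 3) (Fin 1) ℝ) := by
  ext i j
  fin_cases i <;> fin_cases j <;> simp

theorem ones_transpose_mul_wgStiffness (l₁ l₂ l₃ A : ℝ) :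
    (!![1; 1; 1] : Matrix (Fin 3) (Fin 1) ℝ)ᵀ * wgStiffness l₁ l₂ l₃ A =
      (48 * A / (l₁ + l₂ + l₃)) • !![1, 1, 1] := by
  ext i j
  fin_cases i
  fin_cases j <;> simp [wgStiffness, Matrix.mul_apply, Fin.sum_univ_three] <;> ring

theorem statement11_general (e₁ e₂ e₃ A : ℝ) (he₁ : 0 < e₁) (he₂ : 0 < e₂) (he₃ : 0 < e₃)
    (hA : 0 < A)
    (l₁ l₂ l₃ : ℝ)
    (heron : 16 * A ^ 2 = 2 * (l₁ * l₂ + l₂ * l₃ + l₃ * l₁) - l₁ ^ 2 - l₂ ^ 2 - l₃ ^ 2)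
    (L : ℝ) (hL : L = l₁ + l₂ + l₃)
    (D : Matrix (Fin 3) (Fin 3) ℝ)
    (hD : D = (1 / (48 * A)) •
      !![e₁ ^ 2 * (3 * (l₂ + l₃) - l₁), e₁ * e₂ * (l₁ + l₂ - 3 * l₃), e₁ * e₃ * (l₁ + l₃ - 3 * l₂);
         e₁ * e₂ * (l₁ + l₂ - 3 * l₃), e₂ ^ 2 * (3 * (l₁ + l₃) - l₂), e₂ * e₃ * (l₂ + l₃ - 3 * l₁);
         e₁ * e₃ * (l₁ + l₃ - 3 * l₂), e₂ * e₃ * (l₂ + l₃ - 3 * l₁), e₃ ^ 2 * (3 * (l₁ + l₂) - l₃)])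
    (Z : Matrix (Fin 3) (Fin 1) ℝ) (hZ : Z = !![e₁; e₂; e₃])
    (T : Matrix (Fin 3) (Fin 3) ℝ) (hT : T = Matrix.diagonal ![e₁, e₂, e₃]) :
    IsUnit D.det ∧
    Zᵀ * D⁻¹ * Z = !![144 * A / L] ∧
    Zᵀ * D⁻¹ * T = (48 * A / L) • !![1, 1, 1] ∧
    Tᵀ * D⁻¹ * T = (16 * A / L) • !![1, 1, 1; 1, 1, 1; 1, 1, 1]
      + (1 / (2 * A)) • !![2 * l₁, l₃ - l₁ - l₂, l₂ - l₁ - l₃;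
          l₃ - l₁ - l₂, 2 * l₂, l₁ - l₂ - l₃;
          l₂ - l₁ - l₃, l₁ - l₂ - l₃, 2 * l₃] := by
  rw [← diagonal_mul_rtGramCore_mul_diagonal, ← hT] at hD
  rw [col_eq_diagonal_mul_ones, ← hT] at hZ
  have hcore := rtGramCore_mul_wgStiffness hA.ne' heron
  have hTdet : IsUnit T.det := by
    rw [hT, det_diagonal, Fin.prod_univ_three, isUnit_iff_ne_zero]
    simp only [Matrix.cons_val_zero, Matrix.cons_val_one, Matrix.cons_val_two]
    positivity
  have hK : T * D⁻¹ * T = wgStiffness l₁ l₂ l₃ A := by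
    rw [hD, Matrix.mul_inv_sandwich_mul hTdet, inv_eq_right_inv hcore]
  have hTt : Tᵀ = T := by rw [hT, diagonal_transpose]
  have hrow : Zᵀ * D⁻¹ * T = (48 * A / L) • !![1, 1, 1] := by
    rw [hZ, transpose_mul, hTt, Matrix.mul_assoc _ T, Matrix.mul_assoc _ (T * D⁻¹), hK, hL,
      ones_transpose_mul_wgStiffness]
  refine ⟨?_, ?_, hrow, ?_⟩
  · rw [hD, det_mul, det_mul]
    exact (hTdet.mul (isUnit_det_of_right_inverse hcore)).mul hTdet
  · rw [hZ, ← Matrix.mul_assoc, ← hZ, hrow]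
    ext i j
    fin_cases i; fin_cases j
    simp [Matrix.mul_apply, Fin.sum_univ_three]
    ring
  · rw [hTt, hK, hL]
    rfl

/-- For side lengths `e₁, e₂, e₃` of a triangle of area `A` (with
`l_i = e_i²` satisfying Heron's relation) and `L = l₁ + l₂ + l₃`, the Raviart–Thomas mass
matrix `D` is invertible and the weak Galerkin local stiffness blocks for the Poisson
equation are: `Zᵗ D⁻¹ Z = 144A/L`, `Zᵗ D⁻¹ T = (48A/L)(1,1,1)`, and
`Tᵗ D⁻¹ T = (16A/L) J + (1/(2A)) S`. -/
theorem statement11 (e₁ e₂ e₃ A : ℝ) (he₁ : 0 < e₁) (he₂ : 0 < e₂) (he₃ : 0 < e₃)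
    (hA : 0 < A)
    (l₁ l₂ l₃ : ℝ) (hl₁ : l₁ = e₁ ^ 2) (hl₂ : l₂ = e₂ ^ 2) (hl₃ : l₃ = e₃ ^ 2)
    (heron : 16 * A ^ 2 = 2 * (l₁ * l₂ + l₂ * l₃ + l₃ * l₁) - l₁ ^ 2 - l₂ ^ 2 - l₃ ^ 2)
    (L : ℝ) (hL : L = l₁ + l₂ + l₃)
    (D : Matrix (Fin 3) (Fin 3) ℝ)
    (hD : D = (1 / (48 * A)) •
      !![e₁ ^ 2 * (3 * (l₂ + l₃) - l₁), e₁ * e₂ * (l₁ + l₂ - 3 * l₃), e₁ * e₃ * (l₁ + l₃ - 3 * l₂);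
         e₁ * e₂ * (l₁ + l₂ - 3 * l₃), e₂ ^ 2 * (3 * (l₁ + l₃) - l₂), e₂ * e₃ * (l₂ + l₃ - 3 * l₁);
         e₁ * e₃ * (l₁ + l₃ - 3 * l₂), e₂ * e₃ * (l₂ + l₃ - 3 * l₁), e₃ ^ 2 * (3 * (l₁ + l₂) - l₃)])
    (Z : Matrix (Fin 3) (Fin 1) ℝ) (hZ : Z = !![e₁; e₂; e₃])
    (T : Matrix (Fin 3) (Fin 3) ℝ) (hT : T = Matrix.diagonal ![e₁, e₂, e₃]) :
    IsUnit D.det ∧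
    Zᵀ * D⁻¹ * Z = !![144 * A / L] ∧
    Zᵀ * D⁻¹ * T = (48 * A / L) • !![1, 1, 1] ∧
    Tᵀ * D⁻¹ * T = (16 * A / L) • !![1, 1, 1; 1, 1, 1; 1, 1, 1]
      + (1 / (2 * A)) • !![2 * l₁, l₃ - l₁ - l₂, l₂ - l₁ - l₃;
          l₃ - l₁ - l₂, 2 * l₂, l₁ - l₂ - l₃;
          l₂ - l₁ - l₃, l₁ - l₂ - l₃, 2 * l₃] :=
  statement11_general e₁ e₂ e₃ A he₁ he₂ he₃ hA l₁ l₂ l₃ heron L hL D hD Z hZ T hT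
end
end
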